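/- arXiv:1909.10261 — 2 statements merged into one kernel-verified Lean document; each statement's English description precedes it below -/
import Mathlib

section
/- If L is a language such that cut_{i,j}(L) is a length language for some i, j ≥ 0, then for every n ≥ i + j with L ∩ Σⁿ ≠ ∅ and every word w ∈ Σⁿ, dist(w, L) ≤ i + j; in particular L is trivial. -/
variable {α : Type*} [DecidableEq α]

def cutL (i j : ℕ) (L : Set (List α)) : Set (List α) :=
  {y | ∃ x z : List α, x.length = i ∧ z.length = j ∧ x ++ y ++ z ∈ L}

/-- Hamming distance between two lists. -/
def hdist (u v : List α) : ℕ :=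
  ((u.zip v).filter fun p => p.1 ≠ p.2).length

/-- `K` is a length language: for every `n` it contains all words of length `n`
or none of them. -/
def IsLengthLanguage (K : Set (List α)) : Prop :=
  ∀ n : ℕ, (∀ w : List α, w.length = n → w ∈ K) ∨ (∀ w : List α, w.length = n → w ∉ K)

lemma hdist_self (b : List α) : hdist b b = 0 := by
  induction b with
  | nil => rfl
  | cons h t ih => simp [hdist, List.zip, ih]

lemma hdist_append_le (a b c x z : List α) (hax : a.length = x.length) :
    hdist (a ++ b ++ c) (x ++ b ++ z) ≤ a.length + c.length := by
  have hself : ((b.zip b).filter fun p => p.1 ≠ p.2) = [] :=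
    List.length_eq_zero_iff.mp (hdist_self b)
  unfold hdist
  rw [List.append_assoc, List.append_assoc, List.zip_append hax,
    List.zip_append rfl, List.filter_append, List.filter_append, hself]
  simp only [List.length_append, List.length_nil, Nat.zero_add]
  have h1 : ((a.zip x).filter fun p => p.1 ≠ p.2).length ≤ a.length := by
    calc ((a.zip x).filter fun p => p.1 ≠ p.2).length ≤ (a.zip x).length :=
          List.length_filter_le _ _
      _ ≤ a.length := by rw [List.length_zip]; omega
  have h2 : ((c.zip z).filter fun p => p.1 ≠ p.2).length ≤ c.length := by
    calc ((c.zip z).filter fun p => p.1 ≠ p.2).length ≤ (c.zip z).length :=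
          List.length_filter_le _ _
      _ ≤ c.length := by rw [List.length_zip]; omega
  omega

/-- If some cut-language of `L` is a length language, then every word whose
length `n ≥ i + j` is realized by `L` is within Hamming distance `i + j` of `L`;
in particular `L` is trivial. -/
theorem trivial_of_cut_length_language (L : Set (List α)) (i j : ℕ)
    (h : IsLengthLanguage (cutL i j L)) :
    ∀ n : ℕ, i + j ≤ n → (∃ u ∈ L, u.length = n) →
      ∀ w : List α, w.length = n → ∃ u ∈ L, u.length = n ∧ hdist w u ≤ i + j := by
  rintro n hn ⟨u, huL, hulen⟩ w hw
  set m := n - (i + j) with hm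
  -- u decomposes
  have hu : u.take i ++ ((u.drop i).take m) ++ ((u.drop i).drop m) = u := by
    simp
  have hy : (u.drop i).take m ∈ cutL i j L := by
    refine ⟨u.take i, (u.drop i).drop m, ?_, ?_, by rw [hu]; exact huL⟩
    · simp; omega
    · simp; omega
  have hylen : ((u.drop i).take m).length = m := by simp; omega
  have hall : ∀ v : List α, v.length = m → v ∈ cutL i j L := by
    rcases h m with h1 | h2
    · exact h1
    · exact absurd hy (h2 _ hylen)
  -- w's middle
  have hblen : ((w.drop i).take m).length = m := by simp; omega
  obtain ⟨x, z, hx, hz, hL⟩ := hall _ hblen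
  refine ⟨x ++ (w.drop i).take m ++ z, hL, ?_, ?_⟩
  · simp [hx, hz, hblen]; omega
  · have hw' : w.take i ++ ((w.drop i).take m) ++ ((w.drop i).drop m) = w := by simp
    have hax : (w.take i).length = x.length := by simp [hx]; omega
    calc hdist w (x ++ (w.drop i).take m ++ z)
        = hdist (w.take i ++ ((w.drop i).take m) ++ ((w.drop i).drop m))
            (x ++ (w.drop i).take m ++ z) := by rw [hw']
      _ ≤ (w.take i).length + ((w.drop i).drop m).length :=
          hdist_append_le _ _ _ _ _ hax
      _ ≤ i + j := by simp; omega
end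

section
/- Every regular suffix-free language excludes some word as a factor: if L ⊆ Σ* is recognized by a finite automaton and L is suffix-free, then there exists w ∈ Σ* such that no word in L contains w as a factor. -/
/-- The word `w` occurs in `v` at position `i` (as a contiguous factor). -/
def OccursAt {α : Type*} (w v : List α) (i : ℕ) : Prop :=
  i + w.length ≤ v.length ∧ (v.drop i).take w.length = w

/-- `L` is suffix-free: `xy ∈ L` with `x ≠ λ` implies `y ∉ L`. -/
def SuffixFree {α : Type*} (L : Set (List α)) : Prop :=
  ∀ x y : List α, x ++ y ∈ L → x ≠ [] → y ∉ L

/-- Every regular suffix-free language excludes some word as a factor. -/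
theorem regular_suffixFree_excludes_factor {α Q : Type*} [Nonempty α] [Fintype Q]
    (M : DFA α Q) (hsf : SuffixFree M.accepts) :
    ∃ w : List α, ∀ u ∈ M.accepts, ∀ i, ¬ OccursAt w u i := by
  classical
  obtain ⟨a⟩ := ‹Nonempty α›
  set P : List α → Set Q := fun y => {q | M.evalFrom q y ∈ M.accept} with hP
  -- Lemma A: for any right context `y`, some `z` is a "killer":
  -- no word of the form `x ++ z ++ y` is in the language.
  have lemA : ∀ y : List α, ∃ z : List α, ∀ x : List α, x ++ z ++ y ∉ M.accepts := by
    intro y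
    by_cases h : ∃ x : List α, x ++ [a] ++ y ∈ M.accepts
    · obtain ⟨x1, hx1⟩ := h
      refine ⟨[a] ++ x1 ++ [a], fun x hx => ?_⟩
      have hx' : (x ++ [a]) ++ (x1 ++ [a] ++ y) ∈ M.accepts := by
        simpa [List.append_assoc] using hx
      exact hsf _ _ hx' (by simp) hx1
    · push_neg at h
      exact ⟨[a], fun x => h x⟩
  haveI : Fintype (Set Q) := Fintype.ofFinite _
  -- Key: build one word killing all states of the reverse subset automaton at once.
  have key : ∀ s : Finset (Set Q), (∀ T ∈ s, ∃ y, T = P y) →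
      ∃ w : List α, ∀ T ∈ s, ∀ x : List α, M.eval (x ++ w) ∉ T := by
    intro s
    induction s using Finset.induction_on with
    | empty => exact fun _ => ⟨[], by simp⟩
    | @insert T s' hTs ih =>
      intro hmem
      obtain ⟨w', hw'⟩ := ih (fun T' hT' => hmem T' (Finset.mem_insert_of_mem hT'))
      obtain ⟨y0, hy0⟩ := hmem T (Finset.mem_insert_self _ _)
      obtain ⟨z, hz⟩ := lemA (w' ++ y0)
      refine ⟨z ++ w', fun T' hT' x => ?_⟩
      rcases Finset.mem_insert.mp hT' with h | h
      · subst h; subst hy0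
        intro hcon
        apply hz x
        rw [DFA.mem_accepts]
        have : M.eval ((x ++ (z ++ w')) ++ y0) ∈ M.accept := by
          show M.evalFrom M.start _ ∈ M.accept
          rw [M.evalFrom_of_append]
          exact hcon
        simpa [List.append_assoc] using this
      · have := hw' T' h (x ++ z)
        simpa [List.append_assoc] using this
  obtain ⟨w, hw⟩ := key (Finset.univ.filter fun T => ∃ y, T = P y)
    (fun T hT => (Finset.mem_filter.mp hT).2)
  refine ⟨w, fun u hu i hocc => ?_⟩
  obtain ⟨hlen, heq⟩ := hocc
  set x := u.take i with hx
  set y := u.drop (i + w.length) with hy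
  have h2 : List.drop i u = w ++ y := by
    conv_lhs => rw [← List.drop_take_append_drop u i w.length]
    rw [heq, hy]
  have hu' : u = x ++ w ++ y := by
    rw [List.append_assoc, ← h2, hx, List.take_append_drop]
  have h1 : M.eval (x ++ w) ∈ P y := by
    show M.evalFrom (M.evalFrom M.start (x ++ w)) y ∈ M.accept
    rw [← M.evalFrom_of_append, ← hu']
    exact hu
  exact hw (P y) (Finset.mem_filter.mpr ⟨Finset.mem_univ _, ⟨y, rfl⟩⟩) x h1
end
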